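/- Let A₁, A₂ ∈ SL₂(ℤ) both have nonzero lower-left entries and traces of absolute value greater than 2, and suppose (A₁, A₂) is a ping pong pair. Then the subgroup of SL₂(ℤ) generated by A₁ and A₂ is free of rank 2. -/

import Mathlib

/-- The disk `D(A)` attached to `A ∈ SL₂(ℤ)`: center `a/c`, radius `1/|c|`. -/
def pingDisk (A : Matrix.SpecialLinearGroup (Fin 2) ℤ) : Set ℂ :=
  Metric.ball (((A.1 0 0 : ℤ) : ℂ) / ((A.1 1 0 : ℤ) : ℂ)) (1 / |((A.1 1 0 : ℤ) : ℝ)|)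

/-- `(A₁, A₂)` is a ping pong pair: the four closed disks are pairwise disjoint. -/
def IsPingPongPair (A₁ A₂ : Matrix.SpecialLinearGroup (Fin 2) ℤ) : Prop :=
  Disjoint (closure (pingDisk A₁)) (closure (pingDisk A₁⁻¹)) ∧
  Disjoint (closure (pingDisk A₁)) (closure (pingDisk A₂)) ∧
  Disjoint (closure (pingDisk A₁)) (closure (pingDisk A₂⁻¹)) ∧
  Disjoint (closure (pingDisk A₁⁻¹)) (closure (pingDisk A₂)) ∧
  Disjoint (closure (pingDisk A₁⁻¹)) (closure (pingDisk A₂⁻¹)) ∧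
  Disjoint (closure (pingDisk A₂)) (closure (pingDisk A₂⁻¹))

/-!
Ping pong on the upper half-plane. For `A = [[a, b], [c, d]]` with `c ≠ 0`, the Möbius map
`z ↦ (a z + b)/(c z + d)` satisfies `(A z - a/c) (z + d/c) = -1/c²`, so it sends every point at
distance `> 1/|c|` from `-d/c` into the open disk of radius `1/|c|` about `a/c`: `A` maps the
complement of `D(A⁻¹)` into `D(A)`. With the four closed disks pairwise disjoint, the ping pong
lemma for the action of `SL₂(ℤ)` on `ℍ` gives freeness.
-/

open Matrix UpperHalfPlane Metric
open scoped Pointwise MatrixGroups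

-- `G : Type`: `FreeGroup.injective_lift_of_ping_pong` puts `G` in the universe of the index type.
theorem FreeGroup.injective_lift_of_ping_pong_pair {G : Type} {α : Type*} [Group G]
    [MulAction G α] {a b : G} (P : G → Set α) (ha : (P a).Nonempty) (hb : (P b).Nonempty)
    (h₁ : Disjoint (P a) (P a⁻¹)) (h₂ : Disjoint (P a) (P b)) (h₃ : Disjoint (P a) (P b⁻¹))
    (h₄ : Disjoint (P a⁻¹) (P b)) (h₅ : Disjoint (P a⁻¹) (P b⁻¹)) (h₆ : Disjoint (P b) (P b⁻¹))
    (hP : ∀ g ∈ ({a, a⁻¹, b, b⁻¹} : Set G), g • (P g⁻¹)ᶜ ⊆ P g) :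
    Function.Injective (FreeGroup.lift ![a, b]) := by
  refine FreeGroup.injective_lift_of_ping_pong ![a, b] (fun i => P (![a, b] i))
    (fun i => P (![a, b] i)⁻¹) (fun i => ?_) (fun i j hij => ?_) (fun i j hij => ?_)
    (fun i j => ?_) (fun i => ?_) (fun i => ?_) <;> fin_cases i <;> try fin_cases j
  all_goals simp_all [Function.onFun, h₂.symm, h₄.symm, h₅.symm]

theorem moebius_sub_mul_add_eq {K : Type*} [Field K] {a b c d w : K}
    (hdet : a * d - b * c = 1) (hc : c ≠ 0) (hw : c * w + d ≠ 0) :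
    ((a * w + b) / (c * w + d) - a / c) * (w + d / c) = -1 / c ^ 2 := by
  rw [show w + d / c = (c * w + d) / c by field_simp, div_sub_div _ _ hw hc, div_mul_div_comm,
    div_eq_div_iff (by simp [hw, hc]) (by simp [hc])]
  linear_combination (-(c * w + d) * c ^ 2) * hdet

theorem UpperHalfPlane.exists_coe_mem_ball {w : ℂ} (hw : 0 ≤ w.im) {r : ℝ} (hr : 0 < r) :
    ∃ z : ℍ, (z : ℂ) ∈ ball w r := by
  refine ⟨⟨w + (r / 2 : ℝ) * Complex.I, by simp; positivity⟩, ?_⟩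
  rw [mem_ball, UpperHalfPlane.coe_mk, dist_eq_norm, add_sub_cancel_left, norm_mul,
    Complex.norm_I, mul_one, Complex.norm_real, Real.norm_of_nonneg (by positivity)]
  linarith

section pingDisk

variable (A : SL(2, ℤ)) (hc : A.1 1 0 ≠ 0)
include hc

theorem dist_smul_mul_dist_eq (z : ℍ) :
    dist ((A • z : ℍ) : ℂ) (((A.1 0 0 : ℤ) : ℂ) / ((A.1 1 0 : ℤ) : ℂ)) *
      dist (z : ℂ) (-(((A.1 1 1 : ℤ) : ℂ) / ((A.1 1 0 : ℤ) : ℂ))) =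
      1 / ((A.1 1 0 : ℤ) : ℝ) ^ 2 := by
  have hdet : ((A.1 0 0 : ℤ) : ℂ) * (A.1 1 1 : ℤ) - (A.1 0 1 : ℤ) * (A.1 1 0 : ℤ) = 1 := by
    exact_mod_cast (det_fin_two _).symm.trans A.2
  have hden : ((A.1 1 0 : ℤ) : ℂ) * z + (A.1 1 1 : ℤ) ≠ 0 := by
    have h := denom_ne_zero (SpecialLinearGroup.mapGL ℝ A) z
    rw [denom] at h
    simpa using h
  rw [dist_eq_norm, dist_eq_norm, ← norm_mul, coe_specialLinearGroup_apply, sub_neg_eq_add]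
  simp only [algebraMap_int_eq, eq_intCast, Complex.ofReal_intCast]
  rw [moebius_sub_mul_add_eq hdet (Int.cast_ne_zero.2 hc) hden, norm_div, norm_neg, norm_one,
    norm_pow, Complex.norm_intCast, sq_abs]

theorem coe_smul_mem_pingDisk {z : ℍ} (hz : (z : ℂ) ∉ closure (pingDisk A⁻¹)) :
    ((A • z : ℍ) : ℂ) ∈ pingDisk A := by
  have hinv : pingDisk A⁻¹ =
      ball (-(((A.1 1 1 : ℤ) : ℂ) / ((A.1 1 0 : ℤ) : ℂ))) (1 / |((A.1 1 0 : ℤ) : ℝ)|) := by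
    simp [pingDisk, SpecialLinearGroup.SL2_inv_expl, div_neg]
  have hr : 0 < |((A.1 1 0 : ℤ) : ℝ)| := by positivity
  rw [hinv, closure_ball _ (one_div_pos.2 hr).ne', mem_closedBall, not_le] at hz
  have hprod := dist_smul_mul_dist_eq A hc z
  rw [← sq_abs] at hprod
  rw [pingDisk, mem_ball]
  set r := |((A.1 1 0 : ℤ) : ℝ)|
  set y := dist (z : ℂ) (-(((A.1 1 1 : ℤ) : ℂ) / ((A.1 1 0 : ℤ) : ℂ)))
  have hy : 0 < y := lt_trans (by positivity) hz
  calc _ = 1 / r ^ 2 / y := by rw [← hprod, mul_div_cancel_right₀ _ hy.ne']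
    _ < 1 / r ^ 2 / (1 / r) := by gcongr
    _ = 1 / r := by field_simp

theorem smul_compl_preimage_closure_pingDisk_subset :
    A • ((↑) ⁻¹' closure (pingDisk A⁻¹) : Set ℍ)ᶜ ⊆ (↑) ⁻¹' closure (pingDisk A) := by
  rintro _ ⟨z, hz, rfl⟩
  exact subset_closure (coe_smul_mem_pingDisk A hc hz)

theorem preimage_closure_pingDisk_nonempty :
    ((↑) ⁻¹' closure (pingDisk A) : Set ℍ).Nonempty := by
  obtain ⟨z, hz⟩ := UpperHalfPlane.exists_coe_mem_ball (w := ((A.1 0 0 : ℤ) : ℂ) / (A.1 1 0 : ℤ))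
    (by simp [Complex.div_im]) (one_div_pos.2 (by positivity : 0 < |((A.1 1 0 : ℤ) : ℝ)|))
  exact ⟨z, subset_closure hz⟩

end pingDisk

theorem stmt16_general (A₁ A₂ : Matrix.SpecialLinearGroup (Fin 2) ℤ)
    (hc₁ : A₁.1 1 0 ≠ 0) (hc₂ : A₂.1 1 0 ≠ 0)
    (hpp : IsPingPongPair A₁ A₂) :
    Function.Injective (FreeGroup.lift ![A₁, A₂] : FreeGroup (Fin 2) →*
      Matrix.SpecialLinearGroup (Fin 2) ℤ) := by
  obtain ⟨h₁, h₂, h₃, h₄, h₅, h₆⟩ := hpp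
  have hc : ∀ A ∈ ({A₁, A₁⁻¹, A₂, A₂⁻¹} : Set SL(2, ℤ)), A.1 1 0 ≠ 0 := by
    simp [adjugate_fin_two, hc₁, hc₂]
  exact FreeGroup.injective_lift_of_ping_pong_pair (fun A => ((↑) : ℍ → ℂ) ⁻¹' closure (pingDisk A))
    (preimage_closure_pingDisk_nonempty A₁ hc₁) (preimage_closure_pingDisk_nonempty A₂ hc₂)
    (h₁.preimage _) (h₂.preimage _) (h₃.preimage _) (h₄.preimage _) (h₅.preimage _)
    (h₆.preimage _) fun A hA => smul_compl_preimage_closure_pingDisk_subset A (hc A hA)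

/-- if `A₁, A₂ ∈ SL₂(ℤ)` have nonzero lower-left entries, traces of
absolute value `> 2`, and form a ping pong pair, then the subgroup they generate is
free of rank 2: the natural map from the free group on two generators is injective. -/
theorem stmt16 (A₁ A₂ : Matrix.SpecialLinearGroup (Fin 2) ℤ)
    (hc₁ : A₁.1 1 0 ≠ 0) (hc₂ : A₂.1 1 0 ≠ 0)
    (ht₁ : |A₁.1 0 0 + A₁.1 1 1| > 2) (ht₂ : |A₂.1 0 0 + A₂.1 1 1| > 2)
    (hpp : IsPingPongPair A₁ A₂) :
    Function.Injective (FreeGroup.lift ![A₁, A₂] : FreeGroup (Fin 2) →*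
      Matrix.SpecialLinearGroup (Fin 2) ℤ) :=
  stmt16_general A₁ A₂ hc₁ hc₂ hpp
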